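/- (Norm bound for the ill-posedness data.) There exists a constant C > 0 such that for every integer N ≥ 1, every δ > 0 and every r ∈ [2,∞], the Fourier data f̂^N = (û₀^N, ω̂₀^N) satisfies N^{−1}_r(f̂^N) ≤ C δ N^{1/r − 1/2} (with the convention N^{1/∞} = 1, so that the bound is C δ N^{−1/2} for r = ∞). -/

import Mathlib

open MeasureTheory ENNReal Real Filter
open scoped RealInnerProductSpace

noncomputable section

/-- Physical/frequency space ℝ³ with the Euclidean norm. -/
abbrev R3 := EuclideanSpace ℝ (Fin 3)

/-- Vector values ℂ⁶ = ℂ³ × ℂ³ (velocity and micro-rotation components). -/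
abbrev C6 := (Fin 3 ⊕ Fin 3) → ℂ
/-- ℓ^r norm over ℤ of an ℝ≥0∞-valued sequence, r ∈ [1,∞] (sup when r = ∞). -/
def lnorm (r : ℝ≥0∞) (g : ℤ → ℝ≥0∞) : ℝ≥0∞ :=
  if r = ∞ then ⨆ j, g j else (∑' j, g j ^ r.toReal) ^ (1 / r.toReal)

/-- The time interval (0,T) ⊆ ℝ, for T ∈ (0,∞]. -/
def timeSet (T : ℝ≥0∞) : Set ℝ := {t : ℝ | 0 < t ∧ ENNReal.ofReal t < T}

/-- L^λ(0,T) norm of an ℝ≥0∞-valued function of time, λ ∈ [1,∞]. -/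
def tnorm (lam T : ℝ≥0∞) (h : ℝ → ℝ≥0∞) : ℝ≥0∞ :=
  if lam = ∞ then essSup h (volume.restrict (timeSet T))
  else (∫⁻ t in timeSet T, h t ^ lam.toReal) ^ (1 / lam.toReal)

/-- Littlewood–Paley piece ψ_j(ξ) := ψ(2^{−j}ξ). -/
def psij (ψ : R3 → ℝ) (j : ℤ) (ξ : R3) : ℝ := ψ ((2 : ℝ) ^ (-j) • ξ)

/-- The standing assumptions on the Littlewood–Paley function ψ: nonnegative, smooth,
supported in the annulus {3/4 ≤ |ξ| ≤ 8/3}, with ∑_{j∈ℤ} ψ(2^{−j}ξ) = 1 for ξ ≠ 0. -/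
structure IsLP (ψ : R3 → ℝ) : Prop where
  smooth : ContDiff ℝ (⊤ : ℕ∞) ψ
  nonneg : ∀ ξ, 0 ≤ ψ ξ
  support : ∀ ξ, ψ ξ ≠ 0 → 3 / 4 ≤ ‖ξ‖ ∧ ‖ξ‖ ≤ 8 / 3
  sum_eq_one : ∀ ξ : R3, ξ ≠ 0 → HasSum (fun j : ℤ => psij ψ j ξ) 1

/-- Fourier-side Besov norm N^s_r(F) = ‖ (2^{js} ‖ψ_j F‖_{L¹})_j ‖_{ℓ^r(ℤ)}. -/
def fbNorm {V : Type*} [NormedAddCommGroup V] [NormedSpace ℝ V]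
    (ψ : R3 → ℝ) (s : ℝ) (r : ℝ≥0∞) (F : R3 → V) : ℝ≥0∞ :=
  lnorm r fun j => (2 : ℝ≥0∞) ^ ((j : ℝ) * s) * ∫⁻ ξ, (‖psij ψ j ξ • F ξ‖₊ : ℝ≥0∞)

/-- Fourier-side Chemin–Lerner norm
N^s_{r,λ,T}(F) = ‖ (2^{js} ‖ t ↦ ‖ψ_j F(t,·)‖_{L¹} ‖_{L^λ(0,T)})_j ‖_{ℓ^r(ℤ)}. -/
def clNorm {V : Type*} [NormedAddCommGroup V] [NormedSpace ℝ V]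
    (ψ : R3 → ℝ) (s : ℝ) (r lam T : ℝ≥0∞) (F : ℝ → R3 → V) : ℝ≥0∞ :=
  lnorm r fun j => (2 : ℝ≥0∞) ^ ((j : ℝ) * s) *
    tnorm lam T fun t => ∫⁻ ξ, (‖psij ψ j ξ • F t ξ‖₊ : ℝ≥0∞)
/-- Indicator of the cube {|ξ₁| ≤ 1, |ξ₂ − 2^j| ≤ 1, |ξ₃| ≤ 1} (i.e. χ_j^+). -/
def chiP (j : ℕ) (ξ : R3) : ℝ :=
  if |ξ 0| ≤ 1 ∧ |ξ 1 - 2 ^ j| ≤ 1 ∧ |ξ 2| ≤ 1 then 1 else 0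

/-- Indicator of the cube {|ξ₁| ≤ 1, |ξ₂ + 2^j| ≤ 1, |ξ₃| ≤ 1} (i.e. χ_j^−). -/
def chiM (j : ℕ) (ξ : R3) : ℝ :=
  if |ξ 0| ≤ 1 ∧ |ξ 1 + 2 ^ j| ≤ 1 ∧ |ξ 2| ≤ 1 then 1 else 0

/-- The directional part of the ill-posedness data: (ξ₂, −ξ₁, 0) for the velocity part and
(ξ₂, 0, 0) for the micro-rotation part. -/
def dcomp (ξ : R3) : (Fin 3 ⊕ Fin 3) → ℝ :=
  Sum.elim ![ξ 1, -ξ 0, 0] ![ξ 1, 0, 0]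

/-- The Fourier data f̂^N = (û₀^N, ω̂₀^N):
û₀^N(ξ) = (iδ/√N) ∑_{j=N}^{⌊3N/2⌋+1} 2^j (χ_j^+(ξ) + χ_j^−(ξ)) (ξ₂, −ξ₁, 0)/|ξ|,
ω̂₀^N(ξ) = (iδ/√N) ∑_{j=N}^{⌊3N/2⌋+1} 2^j (χ_j^+(ξ) + χ_j^−(ξ)) (ξ₂, 0, 0)/|ξ|. -/
def fhat (N : ℕ) (δ : ℝ) (ξ : R3) : C6 := fun i =>
  Complex.I * ((δ / Real.sqrt N : ℝ) : ℂ) *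
    (((∑ j ∈ Finset.Icc N (3 * N / 2 + 1), (2 : ℝ) ^ j * (chiP j ξ + chiM j ξ)) *
      (dcomp ξ i / ‖ξ‖) : ℝ) : ℂ)

lemma norm_sq_R3 (ξ : R3) : ‖ξ‖^2 = ∑ i, (ξ i)^2 := by
  rw [EuclideanSpace.norm_eq, Real.sq_sqrt (by positivity)]; simp [sq_abs]

lemma coord_le (ξ : R3) (i : Fin 3) : |ξ i| ≤ ‖ξ‖ := by
  have h : (ξ i)^2 ≤ ‖ξ‖^2 := by
    rw [norm_sq_R3]
    exact Finset.single_le_sum (f := fun i => (ξ i)^2) (fun i _ => sq_nonneg _) (Finset.mem_univ i)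
  calc |ξ i| = Real.sqrt ((ξ i)^2) := (Real.sqrt_sq_eq_abs _).symm
  _ ≤ Real.sqrt (‖ξ‖^2) := Real.sqrt_le_sqrt h
  _ = ‖ξ‖ := Real.sqrt_sq (norm_nonneg _)

lemma chiP_nonneg (k : ℕ) (ξ : R3) : 0 ≤ chiP k ξ := by unfold chiP; positivity
lemma chiM_nonneg (k : ℕ) (ξ : R3) : 0 ≤ chiM k ξ := by unfold chiM; positivity

lemma S_nonneg (N : ℕ) (ξ : R3) :
    0 ≤ ∑ k ∈ Finset.Icc N (3 * N / 2 + 1), (2:ℝ) ^ k * (chiP k ξ + chiM k ξ) := by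
  apply Finset.sum_nonneg; intro k _
  have := chiP_nonneg k ξ; have := chiM_nonneg k ξ; positivity

lemma dcomp_le (ξ : R3) (i : Fin 3 ⊕ Fin 3) : |dcomp ξ i| ≤ ‖ξ‖ := by
  rcases i with i | i <;> fin_cases i <;>
    simp [dcomp] <;>
    exact coord_le ξ _

lemma norm_fhat_le (N : ℕ) (δ : ℝ) (hδ : 0 ≤ δ) (ξ : R3) :
    ‖fhat N δ ξ‖ ≤ (δ / Real.sqrt N) *
      ∑ k ∈ Finset.Icc N (3 * N / 2 + 1), (2:ℝ) ^ k * (chiP k ξ + chiM k ξ) := by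
  set S := ∑ k ∈ Finset.Icc N (3 * N / 2 + 1), (2:ℝ) ^ k * (chiP k ξ + chiM k ξ) with hS
  have hS0 : 0 ≤ S := S_nonneg N ξ
  have hδN : 0 ≤ δ / Real.sqrt N := by positivity
  apply pi_norm_le_iff_of_nonneg (by positivity) |>.2
  intro i
  have : ‖fhat N δ ξ i‖ = (δ / Real.sqrt N) * (S * |dcomp ξ i / ‖ξ‖|) := by
    simp only [fhat, norm_mul, Complex.norm_I, one_mul, Complex.norm_real,
      Real.norm_eq_abs, ← hS]
    rw [abs_of_nonneg hδN, abs_of_nonneg hS0]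
  rw [this]
  apply mul_le_mul_of_nonneg_left _ hδN
  have hd : |dcomp ξ i / ‖ξ‖| ≤ 1 := by
    rcases eq_or_lt_of_le (norm_nonneg ξ) with h | h
    · rw [← h]; simp
    · rw [abs_div, abs_of_nonneg (norm_nonneg ξ), div_le_one h]
      exact dcomp_le ξ i
  calc S * |dcomp ξ i / ‖ξ‖| ≤ S * 1 := mul_le_mul_of_nonneg_left hd hS0
  _ = S := mul_one S

lemma psi_le_one {ψ : R3 → ℝ} (hψ : IsLP ψ) (η : R3) : ψ η ≤ 1 := by
  rcases eq_or_ne η 0 with rfl | hη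
  · by_contra h
    have h0 : ψ 0 ≠ 0 := by intro h'; rw [h'] at h; exact h zero_le_one
    have := (hψ.support 0 h0).1
    simp at this; linarith
  · have hs := hψ.sum_eq_one η hη
    have : psij ψ 0 η ≤ 1 := le_hasSum hs 0 (fun k _ => by
      have := hψ.nonneg ((2:ℝ) ^ (-k) • η); simpa [psij] using this)
    simpa [psij] using this

-- norm of 2^{-j} • ξ
lemma psij_support {ψ : R3 → ℝ} (hψ : IsLP ψ) {j : ℤ} {ξ : R3} (h : psij ψ j ξ ≠ 0) :
    3/4 * (2:ℝ)^j ≤ ‖ξ‖ ∧ ‖ξ‖ ≤ 8/3 * (2:ℝ)^j := by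
  have hsup := hψ.support _ h
  have hn : ‖(2 : ℝ) ^ (-j) • ξ‖ = (2:ℝ)^(-j) * ‖ξ‖ := by
    rw [norm_smul, Real.norm_eq_abs, abs_of_pos (by positivity)]
  rw [hn] at hsup
  have h2 : (0:ℝ) < 2 ^ j := by positivity
  constructor
  · have := hsup.1
    rw [zpow_neg] at this
    calc 3/4 * (2:ℝ)^j ≤ ((2:ℝ)^j)⁻¹ * ‖ξ‖ * (2:ℝ)^j := by nlinarith
    _ = ‖ξ‖ := by field_simp
  · have := hsup.2
    rw [zpow_neg] at this
    calc ‖ξ‖ = ((2:ℝ)^j)⁻¹ * ‖ξ‖ * (2:ℝ)^j := by field_simp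
    _ ≤ 8/3 * (2:ℝ)^j := by nlinarith

def ann (j : ℤ) : Set R3 := {ξ | 3/4 * (2:ℝ)^j ≤ ‖ξ‖ ∧ ‖ξ‖ ≤ 8/3 * (2:ℝ)^j}
def cube (c : ℝ) : Set R3 := {ξ | |ξ 0| ≤ 1 ∧ |ξ 1 - c| ≤ 1 ∧ |ξ 2| ≤ 1}

lemma geom_window {k : ℕ} (hk : 1 ≤ k) {c : ℝ} (hc : |c| = 2 ^ k) {j : ℤ} {ξ : R3}
    (hξ : ξ ∈ ann j ∩ cube c) : j - 3 ≤ (k:ℤ) ∧ (k:ℤ) ≤ j + 3 := by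
  obtain ⟨⟨hlo, hhi⟩, h0, h1, h2⟩ := hξ
  have h2k : (2:ℝ) ≤ 2 ^ k := by
    calc (2:ℝ) = 2^1 := (pow_one 2).symm
    _ ≤ 2^k := by exact pow_le_pow_right₀ one_le_two hk
  have habs1 : (2:ℝ)^k - 1 ≤ |ξ 1| := by
    have : |c| ≤ |ξ 1 - c| + |ξ 1| := by
      calc |c| = |(c - ξ 1) + ξ 1| := by ring_nf
      _ ≤ |c - ξ 1| + |ξ 1| := abs_add_le _ _
      _ = |ξ 1 - c| + |ξ 1| := by rw [abs_sub_comm]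
    rw [hc] at this; linarith
  have habs1' : |ξ 1| ≤ (2:ℝ)^k + 1 := by
    have : |ξ 1| ≤ |ξ 1 - c| + |c| := by
      calc |ξ 1| = |(ξ 1 - c) + c| := by ring_nf
      _ ≤ |ξ 1 - c| + |c| := abs_add_le _ _
    rw [hc] at this; linarith
  -- squared bounds
  have h0sq : (ξ 0)^2 ≤ 1 := by nlinarith [abs_nonneg (ξ 0), sq_abs (ξ 0)]
  have h2sq : (ξ 2)^2 ≤ 1 := by nlinarith [abs_nonneg (ξ 2), sq_abs (ξ 2)]
  have h1sq : (ξ 1)^2 ≤ ((2:ℝ)^k + 1)^2 := by nlinarith [abs_nonneg (ξ 1), sq_abs (ξ 1)]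
  have hnormsq : ‖ξ‖^2 = (ξ 0)^2 + (ξ 1)^2 + (ξ 2)^2 := by
    rw [norm_sq_R3]; simp [Fin.sum_univ_three]
  have hup : ‖ξ‖ ≤ (2:ℝ)^k + 3 := by nlinarith [norm_nonneg ξ]
  have hdown : (2:ℝ)^k - 1 ≤ ‖ξ‖ := le_trans habs1 (coord_le ξ 1)
  constructor
  · -- j ≤ k + 3 : 2^(j-1) ≤ 2^(k+2)
    have : (2:ℝ)^(j-1) ≤ 2^((k:ℤ)+2) := by
      have e1 : (2:ℝ)^(j-1) = 2^j * 2⁻¹ := by rw [zpow_sub₀ (by norm_num), zpow_one]; ring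
      have e2 : (2:ℝ)^((k:ℤ)+2) = 2^k * 4 := by
        rw [zpow_add₀ (by norm_num : (2:ℝ) ≠ 0), zpow_natCast]; norm_num
      rw [e1, e2]
      have hj : (0:ℝ) < 2^j := by positivity
      nlinarith
    have := (zpow_le_zpow_iff_right₀ (by norm_num : (1:ℝ) < 2)).1 this
    omega
  · -- k ≤ j + 3 : 2^(k-1) ≤ 2^(j+2)
    have : (2:ℝ)^((k:ℤ)-1) ≤ 2^(j+2) := by
      have e1 : (2:ℝ)^((k:ℤ)-1) = 2^k * 2⁻¹ := by
        rw [zpow_sub₀ (by norm_num : (2:ℝ) ≠ 0), zpow_natCast, zpow_one]; ring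
      have e2 : (2:ℝ)^(j+2) = 2^j * 4 := by
        rw [zpow_add₀ (by norm_num : (2:ℝ) ≠ 0)]; norm_num
      rw [e1, e2]
      have hj : (0:ℝ) < 2^j := by positivity
      nlinarith
    have := (zpow_le_zpow_iff_right₀ (by norm_num : (1:ℝ) < 2)).1 this
    omega

lemma contin (i : Fin 3) : Continuous (fun ξ : R3 => ξ i) := (EuclideanSpace.proj i).continuous

lemma measCube' (c : ℝ) : MeasurableSet (cube c) := by
  unfold cube
  simp only [Set.setOf_and]
  exact (measurableSet_le ((contin 0).measurable.abs) measurable_const).inter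
    ((measurableSet_le (((contin 1).measurable.sub measurable_const).abs) measurable_const).inter
     (measurableSet_le ((contin 2).measurable.abs) measurable_const))

lemma measAnn' (j : ℤ) : MeasurableSet (ann j) := by
  unfold ann
  simp only [Set.setOf_and]
  exact (measurableSet_le measurable_const continuous_norm.measurable).inter
    (measurableSet_le continuous_norm.measurable measurable_const)

lemma volCube' (c : ℝ) : volume (cube c) = 8 := by
  have hmp := EuclideanSpace.volume_preserving_symm_measurableEquiv_toLp (Fin 3)
  have : cube c = (MeasurableEquiv.toLp 2 (Fin 3 → ℝ)).symm ⁻¹'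
        (Set.univ.pi ![Set.Icc (-1) 1, Set.Icc (c-1) (c+1), Set.Icc (-1) 1]) := by
    ext ξ
    simp [cube, Set.mem_pi, Fin.forall_fin_succ, abs_le,
      Matrix.cons_val_zero, Matrix.cons_val_one]
    intros; constructor <;> intro <;> linarith
  rw [this, hmp.measure_preimage]
  · rw [volume_pi_pi]
    simp [Fin.prod_univ_three, Real.volume_Icc]
    rw [← ENNReal.ofReal_mul (by norm_num), ← ENNReal.ofReal_mul (by norm_num)]
    norm_num
  · apply MeasurableSet.nullMeasurableSet
    exact MeasurableSet.univ_pi (by intro i; fin_cases i <;> simp [measurableSet_Icc])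

lemma pointwise_bound {ψ : R3 → ℝ} (hψ : IsLP ψ) (N : ℕ) (δ : ℝ) (hδ : 0 ≤ δ)
    (j : ℤ) (ξ : R3) :
    (‖psij ψ j ξ • fhat N δ ξ‖₊ : ℝ≥0∞) ≤
      ENNReal.ofReal (δ / Real.sqrt N) * ∑ k ∈ Finset.Icc N (3 * N / 2 + 1),
        ENNReal.ofReal ((2:ℝ)^k) *
          ((ann j ∩ cube ((2:ℝ)^k)).indicator 1 ξ + (ann j ∩ cube (-(2:ℝ)^k)).indicator 1 ξ) := by
  classical
  by_cases hp : psij ψ j ξ = 0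
  · simp [hp]
  · have hann : ξ ∈ ann j := psij_support hψ hp
    have hv : ‖psij ψ j ξ • fhat N δ ξ‖ ≤ (δ / Real.sqrt N) *
        ∑ k ∈ Finset.Icc N (3 * N / 2 + 1), (2:ℝ) ^ k * (chiP k ξ + chiM k ξ) := by
      rw [norm_smul, Real.norm_eq_abs]
      have h1 : |psij ψ j ξ| ≤ 1 := by
        simp only [psij]; rw [abs_of_nonneg (hψ.nonneg _)]; exact psi_le_one hψ _
      calc |psij ψ j ξ| * ‖fhat N δ ξ‖ ≤ 1 * ((δ / Real.sqrt N) *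
          ∑ k ∈ Finset.Icc N (3 * N / 2 + 1), (2:ℝ) ^ k * (chiP k ξ + chiM k ξ)) := by
            apply mul_le_mul h1 (norm_fhat_le N δ hδ ξ) (norm_nonneg _) zero_le_one
      _ = _ := one_mul _
    calc (‖psij ψ j ξ • fhat N δ ξ‖₊ : ℝ≥0∞)
        = ENNReal.ofReal ‖psij ψ j ξ • fhat N δ ξ‖ := (ofReal_norm _).symm
    _ ≤ ENNReal.ofReal ((δ / Real.sqrt N) *
        ∑ k ∈ Finset.Icc N (3 * N / 2 + 1), (2:ℝ) ^ k * (chiP k ξ + chiM k ξ)) :=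
        ENNReal.ofReal_le_ofReal hv
    _ = _ := by
        rw [ENNReal.ofReal_mul (by positivity), ENNReal.ofReal_sum_of_nonneg]
        · congr 1
          apply Finset.sum_congr rfl
          intro k _
          rw [ENNReal.ofReal_mul (by positivity), ENNReal.ofReal_add (chiP_nonneg k ξ) (chiM_nonneg k ξ)]
          congr 1
          congr 1
          · rw [Set.indicator_apply]
            have : ξ ∈ ann j ∩ cube ((2:ℝ)^k) ↔ (|ξ 0| ≤ 1 ∧ |ξ 1 - 2^k| ≤ 1 ∧ |ξ 2| ≤ 1) := by
              simp [Set.mem_inter_iff, hann, cube, Set.mem_setOf_eq]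
            rw [chiP]
            split_ifs with h h' h' <;> simp_all [this]
          · rw [Set.indicator_apply]
            have : ξ ∈ ann j ∩ cube (-(2:ℝ)^k) ↔ (|ξ 0| ≤ 1 ∧ |ξ 1 + 2^k| ≤ 1 ∧ |ξ 2| ≤ 1) := by
              simp [Set.mem_inter_iff, hann, cube, Set.mem_setOf_eq, sub_neg_eq_add]
            rw [chiM]
            split_ifs with h h' h' <;> simp_all [this]
        · intro k _
          have := chiP_nonneg k ξ; have := chiM_nonneg k ξ; positivity

lemma integral_bound {ψ : R3 → ℝ} (hψ : IsLP ψ) {N : ℕ} (hN : 1 ≤ N) {δ : ℝ} (hδ : 0 ≤ δ)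
    (j : ℤ) :
    ∫⁻ ξ, (‖psij ψ j ξ • fhat N δ ξ‖₊ : ℝ≥0∞) ≤
      ENNReal.ofReal (δ / Real.sqrt N) * ∑ k ∈ Finset.Icc N (3 * N / 2 + 1),
        (if j - 3 ≤ (k:ℤ) ∧ (k:ℤ) ≤ j + 3 then ENNReal.ofReal ((2:ℝ)^k) * 16 else 0) := by
  classical
  calc ∫⁻ ξ, (‖psij ψ j ξ • fhat N δ ξ‖₊ : ℝ≥0∞)
      ≤ ∫⁻ ξ, ENNReal.ofReal (δ / Real.sqrt N) * ∑ k ∈ Finset.Icc N (3 * N / 2 + 1),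
        ENNReal.ofReal ((2:ℝ)^k) *
          ((ann j ∩ cube ((2:ℝ)^k)).indicator 1 ξ + (ann j ∩ cube (-(2:ℝ)^k)).indicator 1 ξ) :=
        lintegral_mono (pointwise_bound hψ N δ hδ j)
  _ = ENNReal.ofReal (δ / Real.sqrt N) * ∑ k ∈ Finset.Icc N (3 * N / 2 + 1),
        ENNReal.ofReal ((2:ℝ)^k) *
          (volume (ann j ∩ cube ((2:ℝ)^k)) + volume (ann j ∩ cube (-(2:ℝ)^k))) := by
      rw [lintegral_const_mul' _ _ ENNReal.ofReal_ne_top]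
      congr 1
      rw [lintegral_finset_sum]
      · apply Finset.sum_congr rfl
        intro k _
        rw [lintegral_const_mul' _ _ ENNReal.ofReal_ne_top]
        congr 1
        rw [lintegral_add_left]
        · rw [lintegral_indicator_one ((measAnn' j).inter (measCube' _)),
            lintegral_indicator_one ((measAnn' j).inter (measCube' _))]
        · exact measurable_one.indicator ((measAnn' j).inter (measCube' _))
      · intro k _
        apply Measurable.const_mul
        exact (measurable_one.indicator ((measAnn' j).inter (measCube' _))).add
          (measurable_one.indicator ((measAnn' j).inter (measCube' _)))
  _ ≤ _ := by
      apply mul_le_mul_right ?_ _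
      apply Finset.sum_le_sum
      intro k hk
      have hk1 : 1 ≤ k := le_trans hN (Finset.mem_Icc.1 hk).1
      by_cases hw : j - 3 ≤ (k:ℤ) ∧ (k:ℤ) ≤ j + 3
      · rw [if_pos hw]
        have v1 : volume (ann j ∩ cube ((2:ℝ)^k)) ≤ 8 := by
          calc volume (ann j ∩ cube ((2:ℝ)^k)) ≤ volume (cube ((2:ℝ)^k)) :=
            measure_mono Set.inter_subset_right
          _ = 8 := volCube' _
        have v2 : volume (ann j ∩ cube (-(2:ℝ)^k)) ≤ 8 := by
          calc volume (ann j ∩ cube (-(2:ℝ)^k)) ≤ volume (cube (-(2:ℝ)^k)) :=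
            measure_mono Set.inter_subset_right
          _ = 8 := volCube' _
        calc ENNReal.ofReal ((2:ℝ)^k) * (volume (ann j ∩ cube ((2:ℝ)^k)) + volume (ann j ∩ cube (-(2:ℝ)^k)))
            ≤ ENNReal.ofReal ((2:ℝ)^k) * (8 + 8) := by
              exact mul_le_mul_right (add_le_add v1 v2) _
        _ = ENNReal.ofReal ((2:ℝ)^k) * 16 := by norm_num
      · rw [if_neg hw]
        have e1 : ann j ∩ cube ((2:ℝ)^k) = ∅ := by
          by_contra h
          obtain ⟨ξ, hξ⟩ := Set.nonempty_iff_ne_empty.2 h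
          exact hw (geom_window hk1 (abs_of_pos (by positivity)) hξ)
        have e2 : ann j ∩ cube (-(2:ℝ)^k) = ∅ := by
          by_contra h
          obtain ⟨ξ, hξ⟩ := Set.nonempty_iff_ne_empty.2 h
          refine hw (geom_window hk1 ?_ hξ)
          rw [abs_neg, abs_of_pos (by positivity)]
        rw [e1, e2]
        simp

lemma ofReal_two_zpow (m : ℤ) : ENNReal.ofReal ((2:ℝ)^m) = (2:ℝ≥0∞)^m := by
  rw [← Real.rpow_intCast 2 m, ← ENNReal.rpow_intCast 2 m]
  rw [← ENNReal.ofReal_rpow_of_pos two_pos]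
  norm_num

lemma card_filter_window (N M : ℕ) (j : ℤ) :
    ((Finset.Icc N M).filter (fun k : ℕ => j - 3 ≤ (k:ℤ) ∧ (k:ℤ) ≤ j + 3)).card ≤ 7 := by
  classical
  have hsub : (Finset.Icc N M).filter (fun k : ℕ => j - 3 ≤ (k:ℤ) ∧ (k:ℤ) ≤ j + 3) ⊆
      Finset.Icc (j-3).toNat ((j-3).toNat + 6) := by
    intro k hk
    simp only [Finset.mem_filter, Finset.mem_Icc] at hk ⊢
    omega
  calc _ ≤ (Finset.Icc (j-3).toNat ((j-3).toNat + 6)).card := Finset.card_le_card hsub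
  _ = 7 := by rw [Nat.card_Icc]; omega

lemma bj_bound {ψ : R3 → ℝ} (hψ : IsLP ψ) {N : ℕ} (hN : 1 ≤ N) {δ : ℝ} (hδ : 0 ≤ δ) (j : ℤ) :
    (2:ℝ≥0∞) ^ ((j : ℝ) * (-1)) * ∫⁻ ξ, (‖psij ψ j ξ • fhat N δ ξ‖₊ : ℝ≥0∞) ≤
      896 * ENNReal.ofReal (δ / Real.sqrt N) := by
  classical
  have h2 : (2:ℝ≥0∞) ^ ((j : ℝ) * (-1)) = (2:ℝ≥0∞) ^ (-j : ℤ) := by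
    rw [← ENNReal.rpow_intCast 2 (-j)]
    congr 1
    push_cast; ring
  have hsum : ∑ k ∈ Finset.Icc N (3 * N / 2 + 1),
      (if j - 3 ≤ (k:ℤ) ∧ (k:ℤ) ≤ j + 3 then ENNReal.ofReal ((2:ℝ)^k) * 16 else 0)
      ≤ 7 * ((2:ℝ≥0∞)^(j+3) * 16) := by
    rw [← Finset.sum_filter]
    calc ∑ k ∈ (Finset.Icc N (3*N/2+1)).filter (fun k : ℕ => j - 3 ≤ (k:ℤ) ∧ (k:ℤ) ≤ j + 3),
          ENNReal.ofReal ((2:ℝ)^k) * 16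
        ≤ ∑ k ∈ (Finset.Icc N (3*N/2+1)).filter (fun k : ℕ => j - 3 ≤ (k:ℤ) ∧ (k:ℤ) ≤ j + 3),
          (2:ℝ≥0∞)^(j+3) * 16 := by
          apply Finset.sum_le_sum
          intro k hk
          have hk2 := (Finset.mem_filter.1 hk).2.2
          apply mul_le_mul_left
          calc ENNReal.ofReal ((2:ℝ)^k) = ENNReal.ofReal ((2:ℝ)^(k:ℤ)) := by rw [zpow_natCast]
          _ = (2:ℝ≥0∞)^(k:ℤ) := ofReal_two_zpow _
          _ ≤ (2:ℝ≥0∞)^(j+3) := ENNReal.zpow_le_of_le one_le_two hk2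
    _ = ((Finset.Icc N (3*N/2+1)).filter (fun k : ℕ => j - 3 ≤ (k:ℤ) ∧ (k:ℤ) ≤ j + 3)).card •
          ((2:ℝ≥0∞)^(j+3) * 16) := by rw [Finset.sum_const]
    _ ≤ 7 * ((2:ℝ≥0∞)^(j+3) * 16) := by
        rw [nsmul_eq_mul]
        apply mul_le_mul_left
        exact_mod_cast Nat.cast_le.2 (card_filter_window N (3*N/2+1) j)
  calc (2:ℝ≥0∞) ^ ((j : ℝ) * (-1)) * ∫⁻ ξ, (‖psij ψ j ξ • fhat N δ ξ‖₊ : ℝ≥0∞)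
      ≤ (2:ℝ≥0∞) ^ (-j : ℤ) * (ENNReal.ofReal (δ / Real.sqrt N) * (7 * ((2:ℝ≥0∞)^(j+3) * 16))) := by
        rw [h2]
        exact mul_le_mul_right (le_trans (integral_bound hψ hN hδ j) (mul_le_mul_right hsum _)) _
  _ = ((2:ℝ≥0∞) ^ (-j : ℤ) * (2:ℝ≥0∞)^(j+3)) * (7 * 16) * ENNReal.ofReal (δ / Real.sqrt N) := by
        ring
  _ = 896 * ENNReal.ofReal (δ / Real.sqrt N) := by
        rw [← ENNReal.zpow_add (by norm_num) (by norm_num),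
          show -j + (j + 3) = ((3:ℕ):ℤ) from by push_cast; ring, zpow_natCast]
        norm_num

lemma bj_zero {ψ : R3 → ℝ} (hψ : IsLP ψ) {N : ℕ} (hN : 1 ≤ N) {δ : ℝ} (hδ : 0 ≤ δ) {j : ℤ}
    (hj : j < (N:ℤ) - 3 ∨ ((3*N/2+1 : ℕ):ℤ) + 3 < j) :
    (2:ℝ≥0∞) ^ ((j : ℝ) * (-1)) * ∫⁻ ξ, (‖psij ψ j ξ • fhat N δ ξ‖₊ : ℝ≥0∞) = 0 := by
  classical
  have h0 : ∫⁻ ξ, (‖psij ψ j ξ • fhat N δ ξ‖₊ : ℝ≥0∞) = 0 := by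
    have := integral_bound hψ hN hδ j
    have hz : ∑ k ∈ Finset.Icc N (3 * N / 2 + 1),
        (if j - 3 ≤ (k:ℤ) ∧ (k:ℤ) ≤ j + 3 then ENNReal.ofReal ((2:ℝ)^k) * 16 else 0) = 0 := by
      apply Finset.sum_eq_zero
      intro k hk
      rw [if_neg]
      have := Finset.mem_Icc.1 hk
      omega
    rw [hz, mul_zero] at this
    exact le_antisymm this (zero_le)
  rw [h0, mul_zero]

lemma bj_rpow_zero {ψ : R3 → ℝ} (hψ : IsLP ψ) {N : ℕ} (hN : 1 ≤ N) {δ : ℝ} (hδ : 0 ≤ δ) {j : ℤ}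
    (hj : j ∉ Finset.Icc ((N:ℤ) - 3) (((3*N/2+1 : ℕ):ℤ) + 3)) (ρ : ℝ) (hρ : 0 < ρ) :
    ((2:ℝ≥0∞) ^ ((j : ℝ) * (-1)) * ∫⁻ ξ, (‖psij ψ j ξ • fhat N δ ξ‖₊ : ℝ≥0∞)) ^ ρ = 0 := by
  rw [bj_zero hψ hN hδ (by simp only [Finset.mem_Icc] at hj; omega)]
  exact ENNReal.zero_rpow_of_pos hρ

/-- **norm bound for the ill-posedness data.** There is C > 0 such that for every
integer N ≥ 1, every δ > 0 and every r ∈ [2,∞], the data f̂^N = (û₀^N, ω̂₀^N) satisfies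
N^{−1}_r(f̂^N) ≤ C δ N^{1/r − 1/2} (bound C δ N^{−1/2} when r = ∞). -/
theorem illposedness_data_norm_bound (ψ : R3 → ℝ) (hψ : IsLP ψ) :
    ∃ C : ℝ, 0 < C ∧ ∀ N : ℕ, 1 ≤ N → ∀ δ : ℝ, 0 < δ → ∀ r : ℝ≥0∞, 2 ≤ r →
      fbNorm ψ (-1) r (fhat N δ) ≤
        ENNReal.ofReal (C * δ * (N : ℝ) ^ (1 / r.toReal - 1 / 2)) := by
  classical
  refine ⟨8960, by norm_num, ?_⟩
  intro N hN δ hδ r hr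
  have hNpos : (0:ℝ) < N := by exact_mod_cast hN
  have hsqrt_pos : 0 < Real.sqrt N := Real.sqrt_pos.2 hNpos
  have hsq : Real.sqrt N = (N:ℝ) ^ ((1:ℝ)/2) := Real.sqrt_eq_rpow _
  by_cases hrtop : r = ∞
  · subst hrtop
    simp only [fbNorm, lnorm, if_pos rfl]
    apply iSup_le
    intro j
    refine le_trans (bj_bound hψ hN hδ.le j) ?_
    rw [show (896:ℝ≥0∞) = ENNReal.ofReal 896 by norm_num, ← ENNReal.ofReal_mul (by norm_num)]
    apply ENNReal.ofReal_le_ofReal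
    rw [ENNReal.toReal_top]
    have : (N:ℝ) ^ ((1:ℝ)/0 - 1/2) = (Real.sqrt N)⁻¹ := by
      rw [hsq, ← Real.rpow_neg hNpos.le]
      norm_num
    rw [this]
    rw [div_eq_mul_inv]
    nlinarith [inv_nonneg.2 hsqrt_pos.le, mul_nonneg hδ.le (inv_nonneg.2 hsqrt_pos.le)]
  · have hρ2 : (2:ℝ) ≤ r.toReal := by
      have := ENNReal.toReal_mono hrtop hr
      simpa using this
    set ρ := r.toReal with hρ
    have hρpos : 0 < ρ := by linarith
    have hρinv : 0 < 1/ρ := by positivity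
    simp only [fbNorm, lnorm, if_neg hrtop, ← hρ]
    set M : ℕ := 3 * N / 2 + 1 with hM
    set S : Finset ℤ := Finset.Icc ((N:ℤ) - 3) ((M:ℤ) + 3) with hSdef
    set B : ℝ≥0∞ := 896 * ENNReal.ofReal (δ / Real.sqrt N) with hB
    have hsum : ∑' (j:ℤ), ((2:ℝ≥0∞) ^ ((j:ℝ) * (-1)) *
        ∫⁻ ξ, (‖psij ψ j ξ • fhat N δ ξ‖₊ : ℝ≥0∞)) ^ ρ ≤ (10 * N : ℕ) * B ^ ρ := by
      rw [tsum_eq_sum (s := S) (fun j hj => bj_rpow_zero hψ hN hδ.le hj ρ hρpos)]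
      calc _ ≤ S.card • B ^ ρ := Finset.sum_le_card_nsmul _ _ _ (fun j _ =>
              ENNReal.rpow_le_rpow (bj_bound hψ hN hδ.le j) hρpos.le)
      _ = (S.card : ℝ≥0∞) * B ^ ρ := by rw [nsmul_eq_mul]
      _ ≤ (10 * N : ℕ) * B ^ ρ := by
          apply mul_le_mul_left
          have hcard : S.card ≤ 10 * N := by
            rw [hSdef, Int.card_Icc]
            have h1 : 3 * N / 2 ≤ 3 * N := Nat.div_le_self _ _
            omega
          exact_mod_cast Nat.cast_le.2 hcard
    calc (∑' (j:ℤ), ((2:ℝ≥0∞) ^ ((j:ℝ) * (-1)) *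
            ∫⁻ ξ, (‖psij ψ j ξ • fhat N δ ξ‖₊ : ℝ≥0∞)) ^ ρ) ^ (1/ρ)
        ≤ ((10 * N : ℕ) * B ^ ρ) ^ (1/ρ) := ENNReal.rpow_le_rpow hsum hρinv.le
    _ = ((10 * N : ℕ) : ℝ≥0∞) ^ (1/ρ) * B := by
        rw [ENNReal.mul_rpow_of_nonneg _ _ hρinv.le, ← ENNReal.rpow_mul,
          mul_one_div_cancel hρpos.ne', ENNReal.rpow_one]
    _ ≤ 10 * (N : ℝ≥0∞) ^ (1/ρ) * B := by
        apply mul_le_mul_left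
        rw [Nat.cast_mul, ENNReal.mul_rpow_of_nonneg _ _ hρinv.le]
        apply mul_le_mul_left
        calc ((10:ℕ) : ℝ≥0∞) ^ (1/ρ) ≤ ((10:ℕ) : ℝ≥0∞) ^ (1:ℝ) := by
              apply ENNReal.rpow_le_rpow_of_exponent_le (by norm_num)
              rw [div_le_one hρpos]; linarith
        _ = 10 := by norm_num
    _ ≤ ENNReal.ofReal (8960 * δ * (N : ℝ) ^ (1 / ρ - 1 / 2)) := by
        have hNe : (N : ℝ≥0∞) ^ (1/ρ) = ENNReal.ofReal ((N:ℝ) ^ (1/ρ)) := by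
          rw [← ENNReal.ofReal_natCast, ENNReal.ofReal_rpow_of_pos hNpos]
        rw [hNe, hB]
        rw [show (10:ℝ≥0∞) = ENNReal.ofReal 10 by norm_num,
          show (896:ℝ≥0∞) = ENNReal.ofReal 896 by norm_num,
          ← ENNReal.ofReal_mul (by norm_num),
          ← ENNReal.ofReal_mul (by positivity),
          ← ENNReal.ofReal_mul (by positivity)]
        apply ENNReal.ofReal_le_ofReal
        have hexp : (N:ℝ) ^ (1/ρ - 1/2) = (N:ℝ) ^ (1/ρ) / (N:ℝ) ^ ((1:ℝ)/2) :=
          Real.rpow_sub hNpos _ _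
        rw [hexp, ← hsq]
        rw [div_eq_mul_inv, div_eq_mul_inv]
        ring_nf
        nlinarith [Real.rpow_nonneg hNpos.le (1/ρ), inv_nonneg.2 hsqrt_pos.le,
          mul_nonneg (Real.rpow_nonneg hNpos.le (1/ρ)) (inv_nonneg.2 hsqrt_pos.le),
          mul_nonneg hδ.le (mul_nonneg (Real.rpow_nonneg hNpos.le (1/ρ)) (inv_nonneg.2 hsqrt_pos.le))]
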